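/- Let H be a Tonelli Hamiltonian on ℝⁿ × ℝⁿ with associated Tonelli Lagrangian L, λ > 0, and let Φᵗ be a complete flow of the λ-discounted Hamiltonian vector field; write Φˢ(x,p) = (x_s, p_s) and v_s = ∂H/∂p(x_s, p_s). Let μ be a Borel probability measure on ℝⁿ × ℝⁿ with compact support, invariant under Φᵗ. Suppose u : ℝⁿ → ℝ is continuous and bounded and satisfies u(x) ≤ ∫_{−∞}^0 e^{λs} L(x_s, v_s) ds for every (x,p) in the support of μ. Then ∫ ( L(x, ∂H/∂p(x,p)) − λ u(x) ) dμ(x,p) ≥ 0. -/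

import Mathlib

open Set Filter MeasureTheory Real

noncomputable section

abbrev E (n : ℕ) : Type := EuclideanSpace ℝ (Fin n)

noncomputable def Hp {n : ℕ} (H : E n × E n → ℝ) (x p : E n) : E n :=
  gradient (fun q => H (x, q)) p

noncomputable def Hx {n : ℕ} (H : E n × E n → ℝ) (x p : E n) : E n :=
  gradient (fun y => H (y, p)) x

noncomputable def Lv {n : ℕ} (L : E n × E n → ℝ) (x v : E n) : E n :=
  gradient (fun w => L (x, w)) v

noncomputable def Lx {n : ℕ} (L : E n × E n → ℝ) (x v : E n) : E n :=
  gradient (fun y => L (y, v)) x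

/-- A Tonelli Hamiltonian. -/
def Tonelli {n : ℕ} (H : E n × E n → ℝ) : Prop :=
  ContDiff ℝ 2 H ∧
  (∀ x p v : E n, v ≠ 0 → 0 < (inner ℝ (fderiv ℝ (fun q => Hp H x q) p v) v : ℝ)) ∧
  (∀ A : ℝ, ∃ B : ℝ, 0 ≤ B ∧ ∀ x p : E n, A * ‖p‖ - B ≤ H (x, p))

/-- `L` is the Lagrangian associated to `H` by fiberwise Legendre-Fenchel transform. -/
def IsLagrangianOf {n : ℕ} (L H : E n × E n → ℝ) : Prop :=
  ∀ x v : E n, IsLUB {r : ℝ | ∃ p : E n, r = (inner ℝ p v : ℝ) - H (x, p)} (L (x, v))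

/-- A continuous piecewise `C¹` curve on `[a,b]`, with derivative `γ'`. -/
def PiecewiseC1 {n : ℕ} (a b : ℝ) (γ γ' : ℝ → E n) : Prop :=
  ContinuousOn γ (Set.Icc a b) ∧
  ∃ s : Finset ℝ,
    (∀ t ∈ Set.Icc a b, t ∉ s → HasDerivAt γ (γ' t) t) ∧
    ContinuousOn γ' (Set.Icc a b \ s) ∧
    ∃ C : ℝ, ∀ t ∈ Set.Icc a b, ‖γ' t‖ ≤ C

/-- `u` is λ-dominated by `L`. -/
def Dominated {n : ℕ} (lam : ℝ) (L : E n × E n → ℝ) (u : E n → ℝ) : Prop :=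
  ∀ a b : ℝ, a < b → ∀ γ γ' : ℝ → E n, PiecewiseC1 a b γ γ' →
    Real.exp (lam * b) * u (γ b) - Real.exp (lam * a) * u (γ a) ≤
      ∫ t in a..b, Real.exp (lam * t) * L (γ t, γ' t)

/-- `γ` is `(u,L)`-λ-calibrated on `[a,b]`. -/
def Calibrated {n : ℕ} (lam : ℝ) (L : E n × E n → ℝ) (u : E n → ℝ)
    (a b : ℝ) (γ γ' : ℝ → E n) : Prop :=
  Real.exp (lam * b) * u (γ b) - Real.exp (lam * a) * u (γ a) =
    ∫ t in a..b, Real.exp (lam * t) * L (γ t, γ' t)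

def intVec {n : ℕ} (k : Fin n → ℤ) : E n :=
  (EuclideanSpace.equiv (Fin n) ℝ).symm (fun i => (k i : ℝ))


/-- A complete flow of the λ-discounted Hamiltonian vector field of `H`. -/
def IsDiscountedFlow {n : ℕ} (lam : ℝ) (H : E n × E n → ℝ)
    (Φ : ℝ → E n × E n → E n × E n) : Prop :=
  Φ 0 = id ∧ (∀ t s : ℝ, ∀ z : E n × E n, Φ (t + s) z = Φ t (Φ s z)) ∧
  ∀ (z : E n × E n) (t : ℝ),
    HasDerivAt (fun s => (Φ s z).1) (Hp H (Φ t z).1 (Φ t z).2) t ∧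
    HasDerivAt (fun s => (Φ s z).2) (-Hx H (Φ t z).1 (Φ t z).2 - lam • (Φ t z).2) t

/-- The (topological) support of a measure: points whose every neighbourhood has
positive measure. -/
def msupport {n : ℕ} (μ : Measure (E n × E n)) : Set (E n × E n) :=
  { z | ∀ U ∈ nhds z, 0 < μ U }

/-!
Integrate the hypothesis against `μ` and exchange the order of integration: by invariance,
`∫_μ ∫_{-∞}^0 e^{λs} L(x_s, v_s) ds = (∫_{-∞}^0 e^{λs} ds) ∫_μ L(x, ∂H/∂p)`,
and the first factor is `1/λ`.
Fubini applies because `L(x, ∂H/∂p)` is bounded on the compact support (superlinearity of `H`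
bounds `L` on bounded velocities) and `(s, z) ↦ Φˢ z` is a.e. measurable: it is continuous in
`s`, and each `Φˢ` is a.e. measurable since it preserves `μ`.
-/

open Topology

theorem aemeasurable_of_map_eq_self {α : Type*} [MeasurableSpace α] {μ : Measure α}
    {f : α → α} (h : μ.map f = μ) : AEMeasurable f μ := by
  by_contra hf
  rw [Measure.map_of_not_aemeasurable hf] at h
  exact hf (h ▸ aemeasurable_zero_measure)

theorem tendsto_ceil_mul_div_nat_add_one (s : ℝ) :
    Tendsto (fun k : ℕ => (⌈s * (k + 1)⌉ : ℝ) / (k + 1)) atTop (𝓝 s) := by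
  have hpos : ∀ k : ℕ, (0 : ℝ) < k + 1 := fun k => by positivity
  have hlower : ∀ k : ℕ, s ≤ (⌈s * (k + 1)⌉ : ℝ) / (k + 1) := fun k => by
    rw [le_div_iff₀ (hpos k)]
    exact Int.le_ceil _
  have hupper : ∀ k : ℕ, (⌈s * (k + 1)⌉ : ℝ) / (k + 1) ≤ s + 1 / (k + 1) := fun k => by
    rw [div_le_iff₀ (hpos k), add_mul, one_div_mul_cancel (hpos k).ne']
    exact (Int.ceil_lt_add_one _).le
  have hlim : Tendsto (fun k : ℕ => s + 1 / ((k : ℝ) + 1)) atTop (𝓝 s) := by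
    simpa using tendsto_const_nhds.add (tendsto_one_div_add_atTop_nhds_zero_nat (𝕜 := ℝ))
  exact tendsto_of_tendsto_of_tendsto_of_le_of_le tendsto_const_nhds hlim hlower hupper

/-- The points `⌈s (k+1)⌉ / (k+1)` are rational, depend measurably on `s` and tend to `s`, so
`uncurry u` is an a.e. limit of maps that are measurable on `ℚ × α`. -/
theorem aemeasurable_uncurry_of_continuous_of_aemeasurable {α β : Type*} [MeasurableSpace α]
    [TopologicalSpace β] [TopologicalSpace.PseudoMetrizableSpace β] [MeasurableSpace β]
    [BorelSpace β]
    {μ : Measure α} [SFinite μ] {ν : Measure ℝ} {u : ℝ → α → β}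
    (hcont : ∀ z, Continuous fun t => u t z) (hmeas : ∀ t, AEMeasurable (u t) μ) :
    AEMeasurable (Function.uncurry u) (ν.prod μ) := by
  set g : ℚ → α → β := fun q => (hmeas q).mk
  set r : ℕ → ℝ → ℚ := fun k s => (⌈s * (k + 1)⌉ : ℚ) / (k + 1)
  have hr_meas : ∀ k, Measurable (r k) := fun k =>
    (measurable_of_countable (fun m : ℤ => (m : ℚ) / (k + 1))).comp
      (Int.measurable_ceil.comp (measurable_id.mul_const _))
  have hr_tendsto : ∀ s, Tendsto (fun k => (r k s : ℝ)) atTop (𝓝 s) := fun s => by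
    simpa [r] using tendsto_ceil_mul_div_nat_add_one s
  have hg_eq : ∀ᵐ q ∂(ν.prod μ), ∀ a : ℚ, u a q.2 = g a q.2 :=
    Measure.quasiMeasurePreserving_snd.ae (ae_all_iff.mpr fun a : ℚ => (hmeas a).ae_eq_mk)
  refine aemeasurable_of_tendsto_metrizable_ae atTop
    (f := fun k q => g (r k q.1) q.2) (fun k => ?_) ?_
  · have hg : Measurable fun w : α × ℚ => g w.2 w.1 :=
      measurable_from_prod_countable_left fun a => (hmeas a).measurable_mk
    exact (hg.comp (measurable_snd.prodMk ((hr_meas k).comp measurable_fst))).aemeasurable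
  · filter_upwards [hg_eq] with q hq
    simp only [← hq]
    exact ((hcont q.2).tendsto q.1).comp (hr_tendsto q.1)

section InvariantMeasure

variable {ι α : Type*} [MeasurableSpace ι] [MeasurableSpace α] {ν : Measure ι}
  {μ : Measure α} [IsFiniteMeasure μ] {Φ : ι → α → α} {w : ι → ℝ} {f : α → ℝ} {M : ℝ}

theorem integrable_prod_mul_comp_of_map_eq (hΦ : AEMeasurable (Function.uncurry Φ) (ν.prod μ))
    (hinv : ∀ t, μ.map (Φ t) = μ) (hw : Integrable w ν) (hf : Measurable f)
    (hM : ∀ᵐ z ∂μ, |f z| ≤ M) :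
    Integrable (fun q : ι × α => w q.1 * f (Φ q.1 q.2)) (ν.prod μ) := by
  have hMt : ∀ t, ∀ᵐ z ∂μ, |f (Φ t z)| ≤ M := fun t =>
    ae_of_ae_map (aemeasurable_of_map_eq_self (hinv t)) ((hinv t).symm ▸ hM)
  have hslice : ∀ t, ∀ᵐ z ∂μ, ‖w t * f (Φ t z)‖ ≤ |w t| * M := fun t => by
    filter_upwards [hMt t] with z hz
    rw [norm_mul, Real.norm_eq_abs, Real.norm_eq_abs]
    exact mul_le_mul_of_nonneg_left hz (abs_nonneg _)
  have hsm : AEStronglyMeasurable (fun q : ι × α => w q.1 * f (Φ q.1 q.2)) (ν.prod μ) :=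
    hw.1.comp_fst.mul (hf.comp_aemeasurable hΦ).aestronglyMeasurable
  rw [integrable_prod_iff hsm]
  refine ⟨Eventually.of_forall fun t => ?_, ?_⟩
  · have hft : AEStronglyMeasurable (fun z => f (Φ t z)) μ :=
      (hf.comp_aemeasurable (aemeasurable_of_map_eq_self (hinv t))).aestronglyMeasurable
    exact Integrable.mono' (integrable_const _) (hft.const_mul (w t)) (hslice t)
  · refine Integrable.mono' ((hw.abs.mul_const M).mul_const (μ.real univ))
      hsm.norm.integral_prod_right' (Eventually.of_forall fun t => ?_)
    rw [Real.norm_eq_abs, abs_of_nonneg (integral_nonneg fun _ => norm_nonneg _)]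
    calc ∫ z, ‖w t * f (Φ t z)‖ ∂μ ≤ ∫ _, |w t| * M ∂μ :=
          integral_mono_of_nonneg (Eventually.of_forall fun _ => norm_nonneg _)
            (integrable_const _) (hslice t)
      _ = |w t| * M * μ.real univ := by rw [integral_const, smul_eq_mul, mul_comm]

theorem integral_integral_mul_comp_of_map_eq [SFinite ν]
    (hΦ : AEMeasurable (Function.uncurry Φ) (ν.prod μ))
    (hinv : ∀ t, μ.map (Φ t) = μ) (hw : Integrable w ν) (hf : Measurable f)
    (hM : ∀ᵐ z ∂μ, |f z| ≤ M) :
    ∫ z, ∫ t, w t * f (Φ t z) ∂ν ∂μ = (∫ t, w t ∂ν) * ∫ z, f z ∂μ := by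
  rw [← integral_integral_swap (integrable_prod_mul_comp_of_map_eq hΦ hinv hw hf hM),
    ← integral_mul_const]
  refine integral_congr_ae (Eventually.of_forall fun t => ?_)
  have hft : ∫ z, f (Φ t z) ∂μ = ∫ z, f z ∂μ := by
    rw [← integral_map (aemeasurable_of_map_eq_self (hinv t)) hf.aestronglyMeasurable, hinv t]
  simp only [integral_const_mul, hft]

end InvariantMeasure

theorem continuous_Hp {n : ℕ} {H : E n × E n → ℝ} (hH : ContDiff ℝ 1 H) :
    Continuous fun z : E n × E n => Hp H z.1 z.2 := by
  have hfderiv : Continuous fun z : E n × E n => fderiv ℝ (fun q => H (z.1, q)) z.2 :=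
    (ContDiff.fderiv (f := fun z q => H (z.1, q)) (n := 0) (hH.comp (by fun_prop)) contDiff_snd
      (by norm_num)).continuous
  exact (InnerProductSpace.toDual ℝ (E n)).symm.continuous.comp hfderiv

namespace IsLagrangianOf

variable {n : ℕ} {L H : E n × E n → ℝ}

theorem lowerSemicontinuous (hH : Continuous H) (hLH : IsLagrangianOf L H) :
    LowerSemicontinuous L := by
  intro z c hc
  obtain ⟨_, ⟨p, rfl⟩, hcp, -⟩ := (hLH z.1 z.2).exists_between hc
  have hcont : Continuous fun w : E n × E n => (inner ℝ p w.2 : ℝ) - H (w.1, p) := by fun_prop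
  filter_upwards [(hcont.tendsto z).eventually (lt_mem_nhds hcp)] with w hw
  exact hw.trans_le ((hLH w.1 w.2).1 ⟨p, rfl⟩)

theorem neg_le (hLH : IsLagrangianOf L H) (x v : E n) : -H (x, 0) ≤ L (x, v) :=
  (hLH x v).1 ⟨0, by simp⟩

theorem le_of_norm_le (hLH : IsLagrangianOf L H) {R B : ℝ}
    (hHR : ∀ x p : E n, R * ‖p‖ - B ≤ H (x, p)) {x v : E n} (hv : ‖v‖ ≤ R) :
    L (x, v) ≤ B := by
  refine (hLH x v).2 ?_
  rintro _ ⟨p, rfl⟩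
  have hpv : (inner ℝ p v : ℝ) ≤ R * ‖p‖ :=
    (real_inner_le_norm p v).trans (by nlinarith [norm_nonneg p])
  linarith [hHR x p]

/-- Superlinearity of `H` bounds `L` from above on bounded velocities, and `L(x,v) ≥ -H(x,0)`. -/
theorem exists_abs_le_of_isCompact (hH : Tonelli H) (hLH : IsLagrangianOf L H)
    {V : E n × E n → E n} (hV : Continuous V) {K : Set (E n × E n)} (hK : IsCompact K) :
    ∃ M, ∀ z ∈ K, |L (z.1, V z)| ≤ M := by
  obtain ⟨R, hR⟩ := hK.exists_bound_of_continuousOn hV.continuousOn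
  obtain ⟨B, -, hB⟩ := hH.2.2 R
  obtain ⟨C, hC⟩ : ∃ C, ∀ z ∈ K, ‖H (z.1, 0)‖ ≤ C :=
    hK.exists_bound_of_continuousOn
      (hH.1.continuous.comp (continuous_fst.prodMk continuous_const)).continuousOn
  refine ⟨max B C, fun z hz => abs_le.mpr ⟨?_, ?_⟩⟩
  · have hCz := (abs_le.mp (hC z hz)).2
    linarith [hLH.neg_le z.1 (V z), le_max_right B C]
  · exact (hLH.le_of_norm_le hB (hR z hz)).trans (le_max_left B C)

end IsLagrangianOf

theorem msupport_eq_support {n : ℕ} (μ : Measure (E n × E n)) : msupport μ = μ.support :=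
  Set.ext fun z => (Measure.mem_support_iff_forall z).symm

theorem IsDiscountedFlow.continuous_apply {n : ℕ} {lam : ℝ} {H : E n × E n → ℝ}
    {Φ : ℝ → E n × E n → E n × E n} (hΦ : IsDiscountedFlow lam H Φ) (z : E n × E n) :
    Continuous fun t => Φ t z :=
  (continuous_iff_continuousAt.mpr fun t => (hΦ.2.2 z t).1.continuousAt).prodMk
    (continuous_iff_continuousAt.mpr fun t => (hΦ.2.2 z t).2.continuousAt)

theorem stmt_16_general {n : ℕ} (lam : ℝ) (hlam : 0 < lam)
    (H L : E n × E n → ℝ) (hH : Tonelli H) (hLH : IsLagrangianOf L H)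
    (Φ : ℝ → E n × E n → E n × E n) (hΦ : IsDiscountedFlow lam H Φ)
    (μ : Measure (E n × E n)) (hprob : IsProbabilityMeasure μ)
    (hcpt : ∃ K : Set (E n × E n), IsCompact K ∧ μ Kᶜ = 0)
    (hinv : ∀ t : ℝ, Measure.map (Φ t) μ = μ)
    (u : E n → ℝ) (huc : Continuous u) (hub : ∃ C : ℝ, ∀ x : E n, |u x| ≤ C)
    (hle : ∀ z ∈ msupport μ,
      u z.1 ≤ ∫ s in Set.Iic (0:ℝ),
        Real.exp (lam * s) * L ((Φ s z).1, Hp H (Φ s z).1 (Φ s z).2)) :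
    0 ≤ ∫ z, (L (z.1, Hp H z.1 z.2) - lam * u z.1) ∂μ := by
  obtain ⟨K, hK, hKc⟩ := hcpt
  obtain ⟨C, hC⟩ := hub
  set f : E n × E n → ℝ := fun z => L (z.1, Hp H z.1 z.2)
  have hHp := continuous_Hp (hH.1.of_le one_le_two)
  have hf : Measurable f := (hLH.lowerSemicontinuous hH.1.continuous).measurable.comp
    (continuous_fst.prodMk hHp).measurable
  obtain ⟨M, hM⟩ := hLH.exists_abs_le_of_isCompact hH hHp hK
  have hfM : ∀ᵐ z ∂μ, |f z| ≤ M := measure_mono_null (fun z hz hzK => hz (hM z hzK)) hKc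
  have hflow : AEMeasurable (Function.uncurry Φ) ((volume.restrict (Iic 0)).prod μ) :=
    aemeasurable_uncurry_of_continuous_of_aemeasurable hΦ.continuous_apply
      fun t => aemeasurable_of_map_eq_self (hinv t)
  have hexp := integrableOn_exp_mul_Iic hlam 0
  have hmean :
      ∫ z, lam * (∫ s in Iic (0:ℝ), exp (lam * s) * f (Φ s z)) ∂μ = ∫ z, f z ∂μ := by
    rw [integral_const_mul, integral_integral_mul_comp_of_map_eq hflow hinv hexp hf hfM,
      integral_exp_mul_Iic hlam, mul_zero, exp_zero, ← mul_assoc, mul_one_div_cancel hlam.ne',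
      one_mul]
  have hfi : Integrable f μ :=
    Integrable.mono' (integrable_const M) hf.aestronglyMeasurable (by simpa using hfM)
  have hui : Integrable (fun z : E n × E n => lam * u z.1) μ :=
    Integrable.mono' (integrable_const (lam * C)) (by fun_prop) (Eventually.of_forall fun z => by
      simpa [abs_mul, abs_of_pos hlam] using mul_le_mul_of_nonneg_left (hC z.1) hlam.le)
  have hu_le : ∫ z, lam * u z.1 ∂μ ≤
      ∫ z, lam * (∫ s in Iic (0:ℝ), exp (lam * s) * f (Φ s z)) ∂μ := by
    refine integral_mono_ae hui
      ((integrable_prod_mul_comp_of_map_eq hflow hinv hexp hf hfM).integral_prod_right.const_mul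
        lam) ?_
    filter_upwards [msupport_eq_support μ ▸ Measure.support_mem_ae] with z hz
    exact mul_le_mul_of_nonneg_left (hle z hz) hlam.le
  rw [integral_sub hfi hui]
  linarith

/-- If `u(x) ≤ ∫_{-∞}^0 e^{λs} L(x_s,v_s) ds` on the support of a compactly
supported invariant probability measure `μ`, then `∫ (L - λu) dμ ≥ 0`. -/
theorem stmt_16 {n : ℕ} (hn : 1 ≤ n) (lam : ℝ) (hlam : 0 < lam)
    (H L : E n × E n → ℝ) (hH : Tonelli H) (hLH : IsLagrangianOf L H)
    (Φ : ℝ → E n × E n → E n × E n) (hΦ : IsDiscountedFlow lam H Φ)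
    (μ : Measure (E n × E n)) (hprob : IsProbabilityMeasure μ)
    (hcpt : ∃ K : Set (E n × E n), IsCompact K ∧ μ Kᶜ = 0)
    (hinv : ∀ t : ℝ, Measure.map (Φ t) μ = μ)
    (u : E n → ℝ) (huc : Continuous u) (hub : ∃ C : ℝ, ∀ x : E n, |u x| ≤ C)
    (hle : ∀ z ∈ msupport μ,
      u z.1 ≤ ∫ s in Set.Iic (0:ℝ),
        Real.exp (lam * s) * L ((Φ s z).1, Hp H (Φ s z).1 (Φ s z).2)) :
    0 ≤ ∫ z, (L (z.1, Hp H z.1 z.2) - lam * u z.1) ∂μ :=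
  stmt_16_general lam hlam H L hH hLH Φ hΦ μ hprob hcpt hinv u huc hub hle

end
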